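/- arXiv:1701.04176 — 2 statements merged into one kernel-verified Lean document; each statement's English description precedes it below -/
import Mathlib

section
/- Suppose 0 < D_min ≤ D_j ≤ D_max for all j = 1,…,m. Then for every fixed y ∈ ℝ^m and every A ≥ 0, the residual likelihood satisfies L_RE(A) ≤ det(XᵀX)^{-1/2} · (A + D_max)^{p/2} · (A + D_min)^{-m/2}. -/
/-
The Gram matrix `Xᵀ V(A)⁻¹ X` dominates `(A + Dmax)⁻¹ XᵀX` in the Loewner order, and the
determinant is monotone on positive semidefinite matrices (write the smaller one as `Cᴴ C` and
the larger as `Cᴴ (1 + Q) C` with `Q ⪰ 0`), so `det (Xᵀ V⁻¹ X) ≥ (A + Dmax)^(-p) det (XᵀX)`.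
Trivially `det V ≥ (A + Dmin)^m`. Finally `P(A) = (1 - H)ᵀ V⁻¹ (1 - H)` for the oblique
projection `H = X (Xᵀ V⁻¹ X)⁻¹ Xᵀ V⁻¹`, so the quadratic form `yᵀ P y` is nonnegative and the
exponential factor is at most `1`.
-/

open Matrix

/-- The covariance matrix `V(A) = diag(A + D₁, …, A + Dₘ)` of the Fay–Herriot model. -/
noncomputable def Vmat {m : ℕ} (D : Fin m → ℝ) (A : ℝ) : Matrix (Fin m) (Fin m) ℝ :=
  Matrix.diagonal (fun j => A + D j)

/-- The matrix `P(A) = V(A)⁻¹ − V(A)⁻¹ X (Xᵀ V(A)⁻¹ X)⁻¹ Xᵀ V(A)⁻¹`. -/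
noncomputable def Pmat {m p : ℕ} (X : Matrix (Fin m) (Fin p) ℝ) (D : Fin m → ℝ) (A : ℝ) :
    Matrix (Fin m) (Fin m) ℝ :=
  (Vmat D A)⁻¹ - (Vmat D A)⁻¹ * X * (Xᵀ * (Vmat D A)⁻¹ * X)⁻¹ * Xᵀ * (Vmat D A)⁻¹

/-- The residual likelihood
`L_RE(A) = det(Xᵀ V(A)⁻¹ X)^(−1/2) · det(V(A))^(−1/2) · exp(−½ yᵀ P(A) y)`. -/
noncomputable def LRE {m p : ℕ} (X : Matrix (Fin m) (Fin p) ℝ) (D : Fin m → ℝ)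
    (y : Fin m → ℝ) (A : ℝ) : ℝ :=
  ((Xᵀ * (Vmat D A)⁻¹ * X).det) ^ (-(1 : ℝ) / 2) * ((Vmat D A).det) ^ (-(1 : ℝ) / 2) *
    Real.exp (-(1 / 2) * (y ⬝ᵥ (Pmat X D A).mulVec y))

open scoped MatrixOrder

namespace Matrix

lemma mulVec_injective_of_rank_eq_card {m p K : Type*} [Fintype p] [Field K]
    {X : Matrix m p K} (hX : X.rank = Fintype.card p) : Function.Injective X.mulVec := by
  have hker := X.mulVecLin.finrank_range_add_finrank_ker
  rw [← rank, hX, Module.finrank_fintype_fun_eq_card, Nat.add_eq_left,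
    Submodule.finrank_eq_zero, LinearMap.ker_eq_bot] at hker
  exact hker

section

variable {m p : Type*} [Fintype m] [Fintype p] [DecidableEq m] [DecidableEq p]

lemma PosSemidef.one_le_det_one_add {Q : Matrix m m ℝ} (hQ : Q.PosSemidef) :
    1 ≤ (1 + Q).det := by
  have hH : (1 + Q).IsHermitian := (PosSemidef.one.add hQ).isHermitian
  have heig : ∀ i, 1 ≤ hH.eigenvalues i := fun i => by
    have hmem : hH.eigenvalues i - 1 + 1 ∈ spectrum ℝ (algebraMap ℝ (Matrix m m ℝ) 1 + Q) := by
      simpa using hH.eigenvalues_mem_spectrum_real i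
    have hshift : 0 ≤ hH.eigenvalues i - 1 :=
      (posSemidef_iff_isHermitian_and_spectrum_nonneg.mp hQ).2
        (spectrum.add_mem_add_iff.mp hmem)
    linarith
  rw [hH.det_eq_prod_eigenvalues]
  simpa using Finset.prod_le_prod (fun _ _ => zero_le_one) fun i _ => heig i

lemma PosSemidef.det_le_det {A B : Matrix m m ℝ} (hA : A.PosSemidef) (hAB : (B - A).PosSemidef) :
    A.det ≤ B.det := by
  by_cases hdet : A.det = 0
  · rw [hdet]; simpa using (hA.add hAB).det_nonneg
  obtain ⟨C, rfl⟩ := CStarAlgebra.nonneg_iff_eq_star_mul_self.mp hA.nonneg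
  have hC : IsUnit C.det := by
    rw [det_mul] at hdet
    exact isUnit_iff_ne_zero.mpr (right_ne_zero_of_mul hdet)
  have hdecomp : B = star C * (1 + (C⁻¹)ᴴ * (B - star C * C) * C⁻¹) * C := by
    rw [star_eq_conjTranspose, mul_add, add_mul, mul_one, ← mul_assoc, ← mul_assoc,
      ← conjTranspose_mul, nonsing_inv_mul _ hC, conjTranspose_one, one_mul,
      nonsing_inv_mul_cancel_right _ _ hC, add_sub_cancel]
  calc (star C * C).det = (star C * C).det * 1 := (mul_one _).symm
    _ ≤ (star C * C).det * (1 + (C⁻¹)ᴴ * (B - star C * C) * C⁻¹).det :=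
      mul_le_mul_of_nonneg_left (hAB.conjTranspose_mul_mul_same _).one_le_det_one_add
        hA.det_nonneg
    _ = B.det := by
      conv_rhs => rw [hdecomp]
      simp only [det_mul]; ring

lemma PosSemidef.sub_mul_inv_transpose_mul {W : Matrix m m ℝ} (hW : W.PosSemidef)
    (X : Matrix m p ℝ) : (W - W * X * (Xᵀ * W * X)⁻¹ * Xᵀ * W).PosSemidef := by
  set G := Xᵀ * W * X with hGdef
  by_cases hG : IsUnit G.det
  swap
  -- Mathlib's junk value `G⁻¹ = 0` for singular `G`.
  · simpa [nonsing_inv_apply_not_isUnit _ hG] using hW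
  have hWt : Wᵀ = W := by simpa using hW.isHermitian.eq
  have hGinvt : (G⁻¹)ᵀ = G⁻¹ := by
    simp only [transpose_nonsing_inv, G, transpose_mul, hWt, transpose_transpose,
      Matrix.mul_assoc]
  have hcancel : ∀ Z : Matrix p m ℝ, G⁻¹ * (Xᵀ * (W * (X * (G⁻¹ * Z)))) = G⁻¹ * Z := fun Z => by
    rw [← Matrix.mul_assoc W, ← Matrix.mul_assoc Xᵀ, ← Matrix.mul_assoc Xᵀ W, ← hGdef,
      nonsing_inv_mul_cancel_left _ _ hG]
  clear_value G
  convert hW.conjTranspose_mul_mul_same (1 - X * G⁻¹ * Xᵀ * W) using 1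
  simp only [conjTranspose_eq_transpose_of_trivial, transpose_sub, transpose_one, transpose_mul,
    hWt, hGinvt, transpose_transpose, Matrix.sub_mul, Matrix.mul_sub, Matrix.one_mul,
    Matrix.mul_one, Matrix.mul_assoc, hcancel]
  abel

lemma pow_mul_det_le_det_transpose_mul_diagonal_mul {w : m → ℝ} {c : ℝ} (hc : 0 ≤ c)
    (hw : ∀ j, c ≤ w j) (X : Matrix m p ℝ) :
    c ^ Fintype.card p * (Xᵀ * X).det ≤ (Xᵀ * diagonal w * X).det := by
  rw [← det_smul]
  apply PosSemidef.det_le_det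
  · simpa using (posSemidef_conjTranspose_mul_self X).smul hc
  · have hdiag : (diagonal fun j => w j - c).PosSemidef :=
      posSemidef_diagonal_iff.mpr fun j => sub_nonneg.mpr (hw j)
    convert hdiag.conjTranspose_mul_mul_same X using 1
    rw [conjTranspose_eq_transpose_of_trivial, ← diagonal_sub, Matrix.mul_sub, Matrix.sub_mul,
      ← smul_one_eq_diagonal, Matrix.mul_smul, Matrix.smul_mul, Matrix.mul_one]

end

end Matrix

section FayHerriot

variable {m : ℕ} {D : Fin m → ℝ} {A : ℝ}

lemma Vmat_inv (hV : ∀ j, 0 < A + D j) : (Vmat D A)⁻¹ = diagonal fun j => (A + D j)⁻¹ := by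
  refine inv_eq_left_inv ?_
  rw [Vmat, diagonal_mul_diagonal, ← diagonal_one]
  exact congrArg diagonal (funext fun j => inv_mul_cancel₀ (hV j).ne')

lemma posSemidef_Vmat (hV : ∀ j, 0 ≤ A + D j) : (Vmat D A).PosSemidef :=
  posSemidef_diagonal_iff.mpr hV

lemma dotProduct_Pmat_mulVec_nonneg {p : ℕ} (X : Matrix (Fin m) (Fin p) ℝ)
    (hV : ∀ j, 0 ≤ A + D j) (y : Fin m → ℝ) : 0 ≤ y ⬝ᵥ Pmat X D A *ᵥ y := by
  simpa [Pmat] using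
    ((posSemidef_Vmat hV).inv.sub_mul_inv_transpose_mul X).dotProduct_mulVec_nonneg y

lemma LRE_le_det_rpow_mul_det_rpow {p : ℕ} (X : Matrix (Fin m) (Fin p) ℝ)
    (hV : ∀ j, 0 ≤ A + D j) (y : Fin m → ℝ) :
    LRE X D y A ≤
      (Xᵀ * (Vmat D A)⁻¹ * X).det ^ (-(1 : ℝ) / 2) * (Vmat D A).det ^ (-(1 : ℝ) / 2) := by
  have hVinv := (posSemidef_Vmat hV).inv
  have hG : 0 ≤ (Xᵀ * (Vmat D A)⁻¹ * X).det := by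
    simpa using (hVinv.conjTranspose_mul_mul_same X).det_nonneg
  refine mul_le_of_le_one_right (mul_nonneg (Real.rpow_nonneg hG _)
    (Real.rpow_nonneg (posSemidef_Vmat hV).det_nonneg _)) (Real.exp_le_one_iff.mpr ?_)
  nlinarith [dotProduct_Pmat_mulVec_nonneg X hV y]

lemma pow_le_det_Vmat {Dmin : ℝ} (hDmin : 0 ≤ A + Dmin) (hD : ∀ j, Dmin ≤ D j) :
    (A + Dmin) ^ m ≤ (Vmat D A).det := by
  rw [Vmat, det_diagonal]
  simpa using Finset.prod_le_prod (s := Finset.univ) (fun _ _ => hDmin)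
    fun j _ => add_le_add_right (hD j) A

lemma pow_mul_det_le_det_Vmat_inv {p : ℕ} (X : Matrix (Fin m) (Fin p) ℝ) {Dmax : ℝ}
    (hV : ∀ j, 0 < A + D j) (hmax : 0 ≤ A + Dmax) (hD : ∀ j, D j ≤ Dmax) :
    (A + Dmax)⁻¹ ^ p * (Xᵀ * X).det ≤ (Xᵀ * (Vmat D A)⁻¹ * X).det := by
  have hVmax : ∀ j, (A + Dmax)⁻¹ ≤ (A + D j)⁻¹ := fun j =>
    inv_anti₀ (hV j) (add_le_add_right (hD j) A)
  rw [Vmat_inv hV]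
  simpa using pow_mul_det_le_det_transpose_mul_diagonal_mul (inv_nonneg.mpr hmax) hVmax X

end FayHerriot

theorem stmt2_general {m p : ℕ} (hm : 0 < m)
    (X : Matrix (Fin m) (Fin p) ℝ) (hX : X.rank = p)
    (D : Fin m → ℝ) (Dmin Dmax : ℝ) (hDmin : 0 < Dmin)
    (hD : ∀ j, Dmin ≤ D j ∧ D j ≤ Dmax)
    (y : Fin m → ℝ) (A : ℝ) (hA : 0 ≤ A) :
    LRE X D y A ≤
      ((Xᵀ * X).det) ^ (-(1 : ℝ) / 2) * (A + Dmax) ^ ((p : ℝ) / 2) *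
        (A + Dmin) ^ (-(m : ℝ) / 2) := by
  have hmin : 0 < A + Dmin := by linarith
  have hV : ∀ j, 0 < A + D j := fun j => hmin.trans_le (by linarith [hD j])
  have hmax : 0 < A + Dmax := (hV ⟨0, hm⟩).trans_le (by linarith [hD ⟨0, hm⟩])
  have hXX : 0 < (Xᵀ * X).det := by
    simpa using (PosDef.conjTranspose_mul_self X
      (mulVec_injective_of_rank_eq_card (by simpa using hX))).det_pos
  have hG := pow_mul_det_le_det_Vmat_inv X hV hmax.le fun j => (hD j).2
  have hdetV := pow_le_det_Vmat hmin.le fun j => (hD j).1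
  have hc : 0 < (A + Dmax)⁻¹ ^ p * (Xᵀ * X).det := by positivity
  have hz : -(1 : ℝ) / 2 ≤ 0 := by norm_num
  calc LRE X D y A
      ≤ (Xᵀ * (Vmat D A)⁻¹ * X).det ^ (-(1 : ℝ) / 2) * (Vmat D A).det ^ (-(1 : ℝ) / 2) :=
        LRE_le_det_rpow_mul_det_rpow X (fun j => (hV j).le) y
    _ ≤ ((A + Dmax)⁻¹ ^ p * (Xᵀ * X).det) ^ (-(1 : ℝ) / 2) *
          ((A + Dmin) ^ m) ^ (-(1 : ℝ) / 2) :=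
        mul_le_mul (Real.rpow_le_rpow_of_nonpos hc hG hz)
          (Real.rpow_le_rpow_of_nonpos (pow_pos hmin m) hdetV hz)
          (Real.rpow_nonneg ((pow_pos hmin m).le.trans hdetV) _) (Real.rpow_nonneg hc.le _)
    _ = _ := by
        rw [Real.mul_rpow (pow_nonneg (inv_nonneg.mpr hmax.le) p) hXX.le, ← Real.rpow_natCast,
          ← Real.rpow_natCast, ← Real.rpow_mul (inv_nonneg.mpr hmax.le), ← Real.rpow_mul hmin.le,
          Real.inv_rpow hmax.le, ← Real.rpow_neg hmax.le]
        ring_nf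

/-- If `0 < Dmin ≤ Dⱼ ≤ Dmax` for all `j`, then for every fixed `y` and every `A ≥ 0`,
`L_RE(A) ≤ det(XᵀX)^(−1/2) · (A + Dmax)^(p/2) · (A + Dmin)^(−m/2)`. -/
theorem stmt2 {m p : ℕ} (hm : 0 < m) (hp : 0 < p) (hpm : p ≤ m)
    (X : Matrix (Fin m) (Fin p) ℝ) (hX : X.rank = p)
    (D : Fin m → ℝ) (Dmin Dmax : ℝ) (hDmin : 0 < Dmin)
    (hD : ∀ j, Dmin ≤ D j ∧ D j ≤ Dmax)
    (y : Fin m → ℝ) (A : ℝ) (hA : 0 ≤ A) :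
    LRE X D y A ≤
      ((Xᵀ * X).det) ^ (-(1 : ℝ) / 2) * (A + Dmax) ^ ((p : ℝ) / 2) *
        (A + Dmin) ^ (-(m : ℝ) / 2) :=
  stmt2_general hm X hX D Dmin Dmax hDmin hD y A hA
end

section
/- (Theorem 1(ii), strict positivity.) Suppose 0 < D_min ≤ D_j ≤ D_max for all j, m > p + 2, and h₊ : [0,∞) → ℝ is continuous with h₊(0) = 0 and 0 < h₊(A) ≤ C for all A > 0 and some constant C > 0. Fix i and y ∈ ℝ^m, and let G(A) = h₊(A)·(A + D_i)·L_RE(A). Then G attains its supremum over [0,∞) at some point Â ∈ (0,∞), and for every maximizer Â of G over [0,∞) the shrinkage estimate B̂ = D_i/(Â + D_i) satisfies 0 < B̂ < 1. -/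
/-!
Since `P(A)` is positive semidefinite, `L_RE(A) ≤ det(XᵀV(A)⁻¹X)^(-1/2) · det(V(A))^(-1/2)`.
Writing `V(A) = A · N(A)` with `N(A) → 1`, this bound is `A^(p/2 - m/2)` times a convergent
factor, so `(A + Dᵢ) L_RE(A) → 0` because `m > p + 2`, and with `h₊` bounded, `G(A) → 0` as
`A → ∞`. `G` is continuous on `[0, ∞)`, vanishes at `0` and is positive on `(0, ∞)`, so it
attains its maximum, and only at points `Â > 0`, where `0 < Dᵢ/(Â + Dᵢ) < 1`.
-/

open Matrix

open Filter Topology Set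

section LinearAlgebra

variable {m n K : Type*} [Fintype n] [Field K]

theorem Matrix.mulVec_injective_of_rank_eq_card_s4 {X : Matrix m n K}
    (hX : X.rank = Fintype.card n) : Function.Injective X.mulVec := by
  have h := LinearMap.finrank_range_add_finrank_ker X.mulVecLin
  rw [← Matrix.rank, hX, Module.finrank_fintype_fun_eq_card, add_eq_left,
    Submodule.finrank_eq_zero] at h
  exact LinearMap.ker_eq_bot.mp h

variable [Fintype m] [DecidableEq m] [DecidableEq n]

theorem Matrix.det_transpose_mul_inv_smul_inv_mul {c : K} (hc : c ≠ 0) (M : Matrix m m K)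
    (X : Matrix m n K) :
    (Xᵀ * (c⁻¹ • M)⁻¹ * X).det = c ^ Fintype.card n * (Xᵀ * M⁻¹ * X).det := by
  by_cases hM : IsUnit M.det
  · have := invertibleOfNonzero (inv_ne_zero hc)
    simp [Matrix.inv_smul _ _ hM, Matrix.mul_smul, Matrix.smul_mul]
  · have hcM : ¬IsUnit (c⁻¹ • M).det := by
      simpa [det_smul, hc] using hM
    rcases isEmpty_or_nonempty n with hn | hn <;>
      simp [nonsing_inv_apply_not_isUnit _ hM, nonsing_inv_apply_not_isUnit _ hcM]

theorem Matrix.continuousAt_inv_of_det_ne_zero [TopologicalSpace K] [IsTopologicalRing K]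
    [ContinuousInv₀ K] {M : Matrix m m K} (hM : M.det ≠ 0) : ContinuousAt Inv.inv M :=
  continuousAt_matrix_inv M <| by
    simpa only [Ring.inverse_eq_inv'] using continuousAt_inv₀ hM

theorem Matrix.PosSemidef.sub_mul_inv_transpose_mul_mul {W : Matrix m m ℝ} (hW : W.PosSemidef)
    (X : Matrix m n ℝ) (hM : IsUnit (Xᵀ * W * X).det) :
    (W - W * X * (Xᵀ * W * X)⁻¹ * Xᵀ * W).PosSemidef := by
  set M := Xᵀ * W * X
  have hWT : Wᵀ = W := hW.1
  have hMT : (M⁻¹)ᵀ = M⁻¹ := by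
    rw [transpose_nonsing_inv]; simp [M, hWT, Matrix.mul_assoc]
  set Q := 1 - X * M⁻¹ * Xᵀ * W
  have hQ : Qᴴ * W * Q = W - W * X * M⁻¹ * Xᵀ * W := by
    have hMinv : M⁻¹ * (Xᵀ * (W * (X * (M⁻¹ * (Xᵀ * W))))) = M⁻¹ * (Xᵀ * W) := by
      rw [← Matrix.mul_assoc Xᵀ, ← Matrix.mul_assoc (Xᵀ * W), ← Matrix.mul_assoc M⁻¹,
        nonsing_inv_mul _ hM, Matrix.one_mul]
    rw [conjTranspose_eq_transpose_of_trivial]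
    simp only [Q, transpose_sub, transpose_one, transpose_mul, transpose_transpose, hWT, hMT,
      Matrix.sub_mul, Matrix.mul_sub, Matrix.one_mul, Matrix.mul_one, Matrix.mul_assoc, hMinv]
    abel
  exact hQ ▸ hW.conjTranspose_mul_mul_same Q

theorem Matrix.det_transpose_mul_self_ne_zero {X : Matrix m n ℝ} (hX : X.rank = Fintype.card n) :
    (Xᵀ * X).det ≠ 0 := by
  have := (PosDef.one.conjTranspose_mul_mul_same (mulVec_injective_of_rank_eq_card_s4 hX)).det_pos
  rw [conjTranspose_eq_transpose_of_trivial, Matrix.mul_one] at this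
  exact this.ne'

end LinearAlgebra

theorem Real.add_mul_rpow_neg_half_mul_rpow_neg_half {A : ℝ} (hA : 0 < A) (c : ℝ) {a b : ℝ}
    (ha : 0 ≤ a) (hb : 0 ≤ b) (p m : ℕ) :
    (A + c) * a ^ (-(1 : ℝ) / 2) * b ^ (-(1 : ℝ) / 2) =
      A ^ (1 + (p : ℝ) / 2 - m / 2) *
        ((1 + c / A) * (A ^ p * a) ^ (-(1 : ℝ) / 2) * ((A ^ m)⁻¹ * b) ^ (-(1 : ℝ) / 2)) := by
  rw [Real.mul_rpow (by positivity) ha, Real.mul_rpow (by positivity) hb,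
    Real.inv_rpow (by positivity), ← Real.rpow_natCast, ← Real.rpow_natCast,
    ← Real.rpow_mul hA.le, ← Real.rpow_mul hA.le, ← Real.rpow_neg hA.le]
  set x := a ^ (-(1 : ℝ) / 2)
  set y := b ^ (-(1 : ℝ) / 2)
  have hpow : A ^ (1 + (p : ℝ) / 2 - m / 2) * A ^ ((p : ℝ) * (-1 / 2)) *
      A ^ (-((m : ℝ) * (-1 / 2))) = A := by
    rw [← Real.rpow_add hA, ← Real.rpow_add hA]
    ring_nf
    exact Real.rpow_one A
  calc (A + c) * x * y = A * (1 + c / A) * x * y := by field_simp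
    _ = A ^ (1 + (p : ℝ) / 2 - m / 2) * A ^ ((p : ℝ) * (-1 / 2)) *
          A ^ (-((m : ℝ) * (-1 / 2))) * (1 + c / A) * x * y := by rw [hpow]
    _ = _ := by ring

theorem ContinuousOn.exists_isMaxOn_Ici_of_tendsto_atTop {α β : Type*}
    [ConditionallyCompleteLinearOrder α] [TopologicalSpace α] [OrderTopology α] [NoMaxOrder α]
    [NoMinOrder α] [LinearOrder β] [TopologicalSpace β] [OrderClosedTopology β]
    {f : α → β} {a x₀ : α} {L : β} (hf : ContinuousOn f (Ici a)) (hx₀ : a ≤ x₀)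
    (hlim : Tendsto f atTop (𝓝 L)) (hL : L < f x₀) : ∃ x, a ≤ x ∧ IsMaxOn f (Ici a) x := by
  refine hf.exists_isMaxOn' isClosed_Ici hx₀ ?_
  rw [cocompact_eq_atBot_atTop, inf_sup_right, eventually_sup]
  constructor
  · filter_upwards [inf_le_left (a := atBot) (eventually_lt_atBot a),
      mem_inf_of_right (mem_principal_self (Ici a))] with x hxa hax
    exact (hxa.not_ge hax).elim
  · exact (hlim.eventually_lt_const hL).filter_mono inf_le_left |>.mono fun x hx => hx.le

section FayHerriot

variable {m p : ℕ} {X : Matrix (Fin m) (Fin p) ℝ} {D : Fin m → ℝ} (y : Fin m → ℝ) {A : ℝ}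

theorem posDef_Vmat (hA : ∀ j, 0 < A + D j) : (Vmat D A).PosDef :=
  posDef_diagonal_iff.mpr hA

theorem posDef_transpose_mul_Vmat_inv_mul (hX : X.rank = p) (hA : ∀ j, 0 < A + D j) :
    (Xᵀ * (Vmat D A)⁻¹ * X).PosDef := by
  simpa only [conjTranspose_eq_transpose_of_trivial] using
    (posDef_Vmat hA).inv.conjTranspose_mul_mul_same
      (mulVec_injective_of_rank_eq_card_s4 (by simpa using hX))

theorem posSemidef_Pmat (hX : X.rank = p) (hA : ∀ j, 0 < A + D j) : (Pmat X D A).PosSemidef :=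
  (posDef_Vmat hA).inv.posSemidef.sub_mul_inv_transpose_mul_mul X
    (posDef_transpose_mul_Vmat_inv_mul hX hA).det_pos.ne'.isUnit

theorem LRE_pos (hX : X.rank = p) (hA : ∀ j, 0 < A + D j) : 0 < LRE X D y A := by
  have := (posDef_transpose_mul_Vmat_inv_mul hX hA).det_pos
  have := (posDef_Vmat hA).det_pos
  unfold LRE
  positivity

theorem LRE_le (hX : X.rank = p) (hA : ∀ j, 0 < A + D j) :
    LRE X D y A ≤
      (Xᵀ * (Vmat D A)⁻¹ * X).det ^ (-(1 : ℝ) / 2) * (Vmat D A).det ^ (-(1 : ℝ) / 2) := by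
  have hquad := (posSemidef_Pmat hX hA).dotProduct_mulVec_nonneg y
  have := (posDef_transpose_mul_Vmat_inv_mul hX hA).det_pos
  have := (posDef_Vmat hA).det_pos
  refine mul_le_of_le_one_right (by positivity) (Real.exp_le_one_iff.mpr ?_)
  simp only [star_trivial] at hquad
  nlinarith

theorem continuousAt_LRE (hX : X.rank = p) (hA : ∀ j, 0 < A + D j) :
    ContinuousAt (LRE X D y) A := by
  have hV : Continuous (Vmat D) := by unfold Vmat; fun_prop
  have hVdet := (posDef_Vmat hA).det_pos.ne'
  have hMdet := (posDef_transpose_mul_Vmat_inv_mul hX hA).det_pos.ne'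
  have hVinv : ContinuousAt (fun A => (Vmat D A)⁻¹) A :=
    (continuousAt_inv_of_det_ne_zero hVdet).comp hV.continuousAt
  have hMinv : ContinuousAt (fun A => (Xᵀ * (Vmat D A)⁻¹ * X)⁻¹) A :=
    (continuousAt_inv_of_det_ne_zero hMdet).comp (f := fun A => Xᵀ * (Vmat D A)⁻¹ * X)
      (by fun_prop)
  unfold LRE Pmat
  fun_prop (disch := exact Or.inl ‹_›)

variable (D) in
theorem inv_smul_Vmat (hA : A ≠ 0) : A⁻¹ • Vmat D A = 1 + A⁻¹ • diagonal D := by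
  ext i j
  rcases eq_or_ne i j with rfl | hij
  · simp [Vmat]
    field_simp
  · simp [Vmat, hij]

variable (D) in
theorem tendsto_inv_smul_Vmat_atTop : Tendsto (fun A => A⁻¹ • Vmat D A) atTop (𝓝 1) := by
  have h := ((tendsto_inv_atTop_zero (𝕜 := ℝ)).smul_const (diagonal D)).const_add
    (1 : Matrix (Fin m) (Fin m) ℝ)
  rw [zero_smul, add_zero] at h
  exact h.congr' <| (eventually_ne_atTop 0).mono fun A hA => (inv_smul_Vmat D hA).symm

variable (D) in
theorem tendsto_det_inv_smul_Vmat_atTop :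
    Tendsto (fun A => (A⁻¹ • Vmat D A).det) atTop (𝓝 1) := by
  simpa [Function.comp_def] using
    (continuous_id.matrix_det.tendsto 1).comp (tendsto_inv_smul_Vmat_atTop D)

variable (X D) in
theorem tendsto_det_transpose_mul_inv_smul_Vmat_inv_mul_atTop :
    Tendsto (fun A => (Xᵀ * (A⁻¹ • Vmat D A)⁻¹ * X).det) atTop (𝓝 (Xᵀ * X).det) := by
  have hinv := (continuousAt_inv_of_det_ne_zero (M := (1 : Matrix (Fin m) (Fin m) ℝ))
    (by simp)).tendsto.comp (tendsto_inv_smul_Vmat_atTop D)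
  have hcont : Continuous fun W : Matrix (Fin m) (Fin m) ℝ => (Xᵀ * W * X).det := by fun_prop
  simpa [Function.comp_def] using (hcont.tendsto _).comp hinv

-- Rescaling `V(A)` by `A⁻¹` isolates the power of `A`; the factor left over converges.
theorem add_mul_LRE_le (hX : X.rank = p) (hA₀ : 0 < A) (hA : ∀ j, 0 < A + D j) {c : ℝ}
    (hc : 0 ≤ A + c) :
    (A + c) * LRE X D y A ≤ A ^ (1 + (p : ℝ) / 2 - m / 2) *
      ((1 + c / A) * (Xᵀ * (A⁻¹ • Vmat D A)⁻¹ * X).det ^ (-(1 : ℝ) / 2) *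
        (A⁻¹ • Vmat D A).det ^ (-(1 : ℝ) / 2)) := by
  have hM := (posDef_transpose_mul_Vmat_inv_mul hX hA).det_pos
  have hV := (posDef_Vmat hA).det_pos
  calc (A + c) * LRE X D y A ≤ (A + c) * ((Xᵀ * (Vmat D A)⁻¹ * X).det ^ (-(1 : ℝ) / 2) *
        (Vmat D A).det ^ (-(1 : ℝ) / 2)) := mul_le_mul_of_nonneg_left (LRE_le y hX hA) hc
    _ = _ := by
      simp only [det_transpose_mul_inv_smul_inv_mul hA₀.ne', det_smul, Fintype.card_fin, inv_pow]
      rw [← mul_assoc]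
      exact Real.add_mul_rpow_neg_half_mul_rpow_neg_half hA₀ c hM.le hV.le p m

theorem tendsto_add_mul_LRE_atTop (hX : X.rank = p) (hm : p + 2 < m) (c : ℝ) :
    Tendsto (fun A => (A + c) * LRE X D y A) atTop (𝓝 0) := by
  have hpow : Tendsto (fun A : ℝ => A ^ (1 + (p : ℝ) / 2 - m / 2)) atTop (𝓝 0) := by
    have : (p : ℝ) + 2 < m := by exact_mod_cast hm
    convert tendsto_rpow_neg_atTop (y := m / 2 - p / 2 - 1) (by linarith) using 3
    ring
  have hXX : (Xᵀ * X).det ≠ 0 := det_transpose_mul_self_ne_zero (by simpa using hX)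
  have hfactor := ((tendsto_const_nhds (x := (1 : ℝ))).add
    ((tendsto_const_nhds (x := c)).div_atTop tendsto_id)).mul
      ((tendsto_det_transpose_mul_inv_smul_Vmat_inv_mul_atTop X D).rpow_const
        (p := -(1 : ℝ) / 2) (Or.inl hXX))
      |>.mul ((tendsto_det_inv_smul_Vmat_atTop D).rpow_const (p := -(1 : ℝ) / 2)
        (Or.inl one_ne_zero))
  have hmajorant := hpow.mul hfactor
  rw [zero_mul] at hmajorant
  have hlarge : ∀ᶠ A in atTop, 0 < A ∧ 0 ≤ A + c ∧ ∀ j, 0 < A + D j := by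
    filter_upwards [eventually_gt_atTop 0, eventually_ge_atTop (-c),
      eventually_all.mpr fun j => eventually_gt_atTop (-D j)] with A hA₀ hAc hAD
    exact ⟨hA₀, by linarith, fun j => by linarith [hAD j]⟩
  refine tendsto_of_tendsto_of_tendsto_of_le_of_le' tendsto_const_nhds hmajorant ?_ ?_
  · filter_upwards [hlarge] with A ⟨_, hc, hA⟩
    exact mul_nonneg hc (LRE_pos y hX hA).le
  · filter_upwards [hlarge] with A ⟨hA₀, hc, hA⟩
    exact add_mul_LRE_le y hX hA₀ hA hc

end FayHerriot

theorem stmt4_general {m p : ℕ} (hm : m > p + 2)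
    (X : Matrix (Fin m) (Fin p) ℝ) (hX : X.rank = p)
    (D : Fin m → ℝ) (Dmin Dmax : ℝ) (hDmin : 0 < Dmin)
    (hD : ∀ j, Dmin ≤ D j ∧ D j ≤ Dmax)
    (hplus : ℝ → ℝ) (C : ℝ)
    (hcont : ContinuousOn hplus (Set.Ici 0)) (h0 : hplus 0 = 0)
    (hpos : ∀ A : ℝ, 0 < A → 0 < hplus A ∧ hplus A ≤ C)
    (i : Fin m) (y : Fin m → ℝ) :
    (∃ Ahat : ℝ, 0 < Ahat ∧
        ∀ A : ℝ, 0 ≤ A →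
          hplus A * (A + D i) * LRE X D y A ≤ hplus Ahat * (Ahat + D i) * LRE X D y Ahat) ∧
      ∀ Ahat : ℝ, 0 ≤ Ahat →
        (∀ A : ℝ, 0 ≤ A →
          hplus A * (A + D i) * LRE X D y A ≤ hplus Ahat * (Ahat + D i) * LRE X D y Ahat) →
        0 < D i / (Ahat + D i) ∧ D i / (Ahat + D i) < 1 := by
  have hDpos : ∀ j, 0 < D j := fun j => hDmin.trans_le (hD j).1
  have hAD : ∀ A : ℝ, 0 ≤ A → ∀ j, 0 < A + D j := fun A hA j => by linarith [hDpos j]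
  set G : ℝ → ℝ := fun A => hplus A * (A + D i) * LRE X D y A
  have hG_pos : ∀ A, 0 < A → 0 < G A := fun A hA =>
    mul_pos (mul_pos (hpos A hA).1 (hAD A hA.le i)) (LRE_pos y hX (hAD A hA.le))
  have hG_cont : ContinuousOn G (Ici 0) :=
    (hcont.mul (continuous_add_const _).continuousOn).mul fun A hA =>
      (continuousAt_LRE y hX (hAD A hA)).continuousWithinAt
  have hG_lim : Tendsto G atTop (𝓝 0) := by
    simp only [G, mul_assoc]
    refine isBoundedUnder_le_mul_tendsto_zero ?_ (tendsto_add_mul_LRE_atTop y hX hm (D i))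
    refine isBoundedUnder_of_eventually_le (a := C) ?_
    filter_upwards [eventually_gt_atTop 0] with A hA
    simpa [abs_of_pos (hpos A hA).1] using (hpos A hA).2
  have hmax_pos : ∀ Ahat, 0 ≤ Ahat → (∀ A, 0 ≤ A → G A ≤ G Ahat) → 0 < Ahat := by
    intro Ahat hAhat hmax
    refine hAhat.lt_of_ne fun hzero => ?_
    have := hmax 1 zero_le_one
    simp only [G, ← hzero, h0, zero_mul] at this
    exact (hG_pos 1 one_pos).not_ge this
  obtain ⟨Ahat, hAhat, hmax⟩ :=
    hG_cont.exists_isMaxOn_Ici_of_tendsto_atTop zero_le_one hG_lim (hG_pos 1 one_pos)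
  refine ⟨⟨Ahat, hmax_pos Ahat hAhat hmax, hmax⟩, fun Ahat hAhat hmax => ?_⟩
  have := hmax_pos Ahat hAhat hmax
  have := hDpos i
  exact ⟨div_pos this (by linarith), (div_lt_one (by linarith)).mpr (by linarith)⟩

/-- Theorem 1(ii), strict positivity: under `0 < Dmin ≤ Dⱼ ≤ Dmax`, `m > p + 2`, and with a
continuous adjustment `h₊` vanishing at `0` and satisfying `0 < h₊(A) ≤ C` for `A > 0`, the
adjusted likelihood `G(A) = h₊(A) · (A + Dᵢ) · L_RE(A)` attains its supremum over `[0,∞)` at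
some point of `(0,∞)`, and every maximizer `Â` yields a shrinkage estimate
`B̂ = Dᵢ/(Â + Dᵢ)` with `0 < B̂ < 1`. -/
theorem stmt4 {m p : ℕ} (hp : 0 < p) (hm : m > p + 2)
    (X : Matrix (Fin m) (Fin p) ℝ) (hX : X.rank = p)
    (D : Fin m → ℝ) (Dmin Dmax : ℝ) (hDmin : 0 < Dmin)
    (hD : ∀ j, Dmin ≤ D j ∧ D j ≤ Dmax)
    (hplus : ℝ → ℝ) (C : ℝ) (hC : 0 < C)
    (hcont : ContinuousOn hplus (Set.Ici 0)) (h0 : hplus 0 = 0)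
    (hpos : ∀ A : ℝ, 0 < A → 0 < hplus A ∧ hplus A ≤ C)
    (i : Fin m) (y : Fin m → ℝ) :
    (∃ Ahat : ℝ, 0 < Ahat ∧
        ∀ A : ℝ, 0 ≤ A →
          hplus A * (A + D i) * LRE X D y A ≤ hplus Ahat * (Ahat + D i) * LRE X D y Ahat) ∧
      ∀ Ahat : ℝ, 0 ≤ Ahat →
        (∀ A : ℝ, 0 ≤ A →
          hplus A * (A + D i) * LRE X D y A ≤ hplus Ahat * (Ahat + D i) * LRE X D y Ahat) →
        0 < D i / (Ahat + D i) ∧ D i / (Ahat + D i) < 1 :=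
  stmt4_general hm X hX D Dmin Dmax hDmin hD hplus C hcont h0 hpos i y
end
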